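/- arXiv:1503.02000 — 3 statements merged into one kernel-verified Lean document; each statement's English description precedes it below -/
import Mathlib

section
/- Let A be a real n×n matrix with A_* := min_{‖ξ‖=1} ⟨Aξ, ξ⟩ > 0, let α := A·r* where r* = (1,…,1), and let V₀(r) = Σᵢ(rᵢ − 1 − ln rᵢ). Then for every r ∈ (0,∞)^n, the derivative of V₀ along the vector field r ↦ (α − A r) • r (componentwise product) satisfies ⟨∇V₀(r), (α − Ar) • r⟩ = −⟨r − r*, A(r − r*)⟩ ≤ −A_* ‖r − r*‖². -/
open Real

theorem lyapunov_derivative_identity {n : ℕ} (A : Matrix (Fin n) (Fin n) ℝ)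
    (Astar : ℝ) (hA : 0 < Astar)
    (hAquad : ∀ ξ : Fin n → ℝ, Astar * (∑ i, ξ i ^ 2) ≤ ∑ i, (A.mulVec ξ) i * ξ i)
    (α : Fin n → ℝ) (hα : α = A.mulVec (fun _ => 1))
    (r : Fin n → ℝ) (hr : ∀ i, 0 < r i) :
    (∑ i, ((r i - 1) / r i) * ((α i - (A.mulVec r) i) * r i))
      = -(∑ i, (r i - 1) * (A.mulVec (fun j => r j - 1)) i) ∧
    (∑ i, ((r i - 1) / r i) * ((α i - (A.mulVec r) i) * r i))
      ≤ -Astar * ∑ i, (r i - 1) ^ 2 := by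
  have key : (∑ i, ((r i - 1) / r i) * ((α i - (A.mulVec r) i) * r i))
      = -(∑ i, (r i - 1) * (A.mulVec (fun j => r j - 1)) i) := by
    rw [← Finset.sum_neg_distrib]
    apply Finset.sum_congr rfl
    intro i _
    have hri : r i ≠ 0 := (hr i).ne'
    have hmul : (A.mulVec (fun j => r j - 1)) i = (A.mulVec r) i - α i := by
      subst hα
      simp [Matrix.mulVec, dotProduct, mul_sub, Finset.sum_sub_distrib]
    rw [hmul]
    field_simp
    ring
  refine ⟨key, key ▸ ?_⟩
  have h := hAquad (fun j => r j - 1)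
  have : Astar * ∑ i, (r i - 1) ^ 2 ≤ ∑ i, (r i - 1) * (A.mulVec (fun j => r j - 1)) i := by
    simpa [mul_comm] using h
  linarith
end

section
/- If r : [0,∞) → (0,∞)^n solves r' = 2ε[α(t) − A(t)r] • r with ‖α(t)‖ ≤ α* and ⟨A(t)x, x⟩ ≥ A_* ‖x‖² for all x with nonnegative components (A_* > 0), then d/dt |r(t)| ≤ 2ε‖r(t)‖(α* − A_* ‖r(t)‖); in particular |r(t)| is strictly decreasing whenever ‖r(t)‖ > α*/A_*. -/
/-!
Because `r > 0`, the derivative of `|r| = ∑ rᵢ` is `2ε ⟨α − A r, r⟩`. Cauchy–Schwarz bounds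
`⟨α, r⟩ ≤ α* ‖r‖`, and coercivity of `A` on the nonnegative cone gives `⟨A r, r⟩ ≥ A_* ‖r‖²`.
-/

open Real Finset

theorem sum_sub_mul_le_sqrt_mul {ι : Type*} [Fintype ι] (a y x : ι → ℝ) {αstar Astar : ℝ}
    (ha : √(∑ i, a i ^ 2) ≤ αstar) (hy : Astar * ∑ i, x i ^ 2 ≤ ∑ i, y i * x i) :
    ∑ i, (a i - y i) * x i ≤ √(∑ i, x i ^ 2) * (αstar - Astar * √(∑ i, x i ^ 2)) := by
  have hsq : √(∑ i, x i ^ 2) ^ 2 = ∑ i, x i ^ 2 :=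
    sq_sqrt (sum_nonneg fun i _ => sq_nonneg (x i))
  have hCS : ∑ i, a i * x i ≤ αstar * √(∑ i, x i ^ 2) :=
    (sum_mul_le_sqrt_mul_sqrt _ a x).trans (mul_le_mul_of_nonneg_right ha (sqrt_nonneg _))
  calc ∑ i, (a i - y i) * x i = ∑ i, a i * x i - ∑ i, y i * x i := by
        simp only [sub_mul, sum_sub_distrib]
    _ ≤ αstar * √(∑ i, x i ^ 2) - Astar * √(∑ i, x i ^ 2) ^ 2 := by rw [hsq]; linarith
    _ = √(∑ i, x i ^ 2) * (αstar - Astar * √(∑ i, x i ^ 2)) := by ring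

theorem deriv_l1_norm_bound_general {n : ℕ} (ε αstar Astar : ℝ) (hε : 0 < ε)
    (α : ℝ → Fin n → ℝ) (A : ℝ → Matrix (Fin n) (Fin n) ℝ)
    (r : ℝ → Fin n → ℝ)
    (hpos : ∀ t : ℝ, 0 ≤ t → ∀ i, 0 < r t i)
    (hsol : ∀ t : ℝ, 0 ≤ t → ∀ i,
      HasDerivAt (fun s => r s i) (2 * ε * (α t i - ((A t).mulVec (r t)) i) * r t i) t)
    (hα : ∀ t : ℝ, 0 ≤ t → Real.sqrt (∑ i, α t i ^ 2) ≤ αstar)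
    (hA : ∀ t : ℝ, 0 ≤ t → ∀ x : Fin n → ℝ, (∀ i, 0 ≤ x i) →
      Astar * (∑ i, x i ^ 2) ≤ ∑ i, ((A t).mulVec x) i * x i) :
    ∀ t : ℝ, 0 ≤ t → ∀ d : ℝ,
      HasDerivAt (fun s => ∑ i, r s i) d t →
      d ≤ 2 * ε * Real.sqrt (∑ i, r t i ^ 2) *
            (αstar - Astar * Real.sqrt (∑ i, r t i ^ 2)) := by
  intro t ht d hd
  have hd_eq : d = 2 * ε * ∑ i, (α t i - ((A t).mulVec (r t)) i) * r t i := by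
    rw [hd.unique (HasDerivAt.fun_sum fun i _ => hsol t ht i), mul_sum]
    simp only [mul_assoc]
  have hinner := sum_sub_mul_le_sqrt_mul (α t) ((A t).mulVec (r t)) (r t) (hα t ht)
    (hA t ht (r t) fun i => (hpos t ht i).le)
  rw [hd_eq, mul_assoc (2 * ε)]
  exact mul_le_mul_of_nonneg_left hinner (by positivity)

theorem deriv_l1_norm_bound {n : ℕ} (ε αstar Astar : ℝ) (hε : 0 < ε) (hAstar : 0 < Astar)
    (α : ℝ → Fin n → ℝ) (A : ℝ → Matrix (Fin n) (Fin n) ℝ)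
    (r : ℝ → Fin n → ℝ)
    (hpos : ∀ t : ℝ, 0 ≤ t → ∀ i, 0 < r t i)
    (hsol : ∀ t : ℝ, 0 ≤ t → ∀ i,
      HasDerivAt (fun s => r s i) (2 * ε * (α t i - ((A t).mulVec (r t)) i) * r t i) t)
    (hα : ∀ t : ℝ, 0 ≤ t → Real.sqrt (∑ i, α t i ^ 2) ≤ αstar)
    (hA : ∀ t : ℝ, 0 ≤ t → ∀ x : Fin n → ℝ, (∀ i, 0 ≤ x i) →
      Astar * (∑ i, x i ^ 2) ≤ ∑ i, ((A t).mulVec x) i * x i) :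
    ∀ t : ℝ, 0 ≤ t → ∀ d : ℝ,
      HasDerivAt (fun s => ∑ i, r s i) d t →
      d ≤ 2 * ε * Real.sqrt (∑ i, r t i ^ 2) *
            (αstar - Astar * Real.sqrt (∑ i, r t i ^ 2)) :=
  deriv_l1_norm_bound_general ε αstar Astar hε α A r hpos hsol hα hA
end

section
/- With S_ϱ = {r ∈ [0,∞)^n : Σⱼ rⱼ ≤ ϱ} (ϱ > 1 fixed) and V₀(r) = Σᵢ(rᵢ − 1 − ln rᵢ), the Lebesgue measure of the set S_ϱ \ V₀^{-1}([0, k|ln ε|]) is O(ε^{k/n}) as ε → 0⁺; i.e. there are constants C, ε₀ > 0 with mes(S_ϱ \ {r ∈ (0,∞)^n : V₀(r) ≤ k|ln ε|}) ≤ C ε^{k/n} for all ε ∈ (0, ε₀). -/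
open Real MeasureTheory

theorem measure_complement_sublevel_small {n : ℕ} (hn : 0 < n) (k ϱ : ℝ)
    (hk : 0 < k) (hϱ : 1 < ϱ) :
    ∃ C > (0:ℝ), ∃ ε₀ > (0:ℝ), ∀ ε ∈ Set.Ioo (0:ℝ) ε₀,
      volume ({r : Fin n → ℝ | (∀ i, 0 ≤ r i) ∧ (∑ i, r i) ≤ ϱ} \
          {r : Fin n → ℝ | (∀ i, 0 < r i) ∧
            ∑ i, (r i - 1 - Real.log (r i)) ≤ k * |Real.log ε|})
        ≤ ENNReal.ofReal (C * ε ^ (k / n)) := by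
  have hϱ0 : (0:ℝ) < ϱ := lt_trans one_pos hϱ
  refine ⟨n * ϱ ^ (n-1) * Real.exp (ϱ / n), by positivity, 1, one_pos, ?_⟩
  rintro ε ⟨hε0, hε1⟩
  set δ := Real.exp (ϱ / n) * ε ^ (k / n) with hδdef
  have hδ0 : 0 < δ := by positivity
  have hn0 : (n:ℝ) ≠ 0 := Nat.cast_ne_zero.mpr hn.ne'
  have hlogδ : Real.log δ = ϱ / n + (k / n) * Real.log ε := by
    rw [hδdef, Real.log_mul (Real.exp_ne_zero _) (by positivity),
      Real.log_exp, Real.log_rpow hε0]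
  have hlogε : Real.log ε < 0 := Real.log_neg hε0 hε1
  -- subset into union of boxes
  have hsub : ({r : Fin n → ℝ | (∀ i, 0 ≤ r i) ∧ (∑ i, r i) ≤ ϱ} \
          {r : Fin n → ℝ | (∀ i, 0 < r i) ∧
            ∑ i, (r i - 1 - Real.log (r i)) ≤ k * |Real.log ε|}) ⊆
      ⋃ i : Fin n, Set.pi Set.univ
        (fun j => if j = i then Set.Ico (0:ℝ) δ else Set.Icc 0 ϱ) := by
    rintro r ⟨⟨hnn, hsum⟩, hr⟩
    have hub : ∀ j, r j ≤ ϱ := fun j =>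
      le_trans (Finset.single_le_sum (fun i _ => hnn i) (Finset.mem_univ j)) hsum
    by_cases h : ∃ i, r i < δ
    · obtain ⟨i, hi⟩ := h
      refine Set.mem_iUnion.mpr ⟨i, fun j _ => ?_⟩
      by_cases hji : j = i
      · simp [hji, Set.mem_Ico, hnn i, hi]
      · simp [hji, Set.mem_Icc, hnn j, hub j]
    · exfalso
      push_neg at h
      apply hr
      have hpos : ∀ i, 0 < r i := fun i => lt_of_lt_of_le hδ0 (h i)
      refine ⟨hpos, ?_⟩
      have h1 : ∑ i, (r i - 1 - Real.log (r i)) ≤ ∑ i : Fin n, (r i - 1 - Real.log δ) := by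
        apply Finset.sum_le_sum
        intro i _
        have := Real.log_le_log hδ0 (h i)
        linarith
      have h2 : ∑ i : Fin n, (r i - 1 - Real.log δ) =
          (∑ i, r i) - n * (1 + Real.log δ) := by
        rw [Finset.sum_sub_distrib, Finset.sum_sub_distrib]
        simp [Finset.card_univ]
        try ring
      have habs : |Real.log ε| = -Real.log ε := abs_of_neg hlogε
      have hnlog : (n:ℝ) * Real.log δ = ϱ + k * Real.log ε := by
        rw [hlogδ]; field_simp
      have hn1 : (1:ℝ) ≤ n := Nat.one_le_cast.mpr hn
      calc ∑ i, (r i - 1 - Real.log (r i)) ≤ (∑ i, r i) - n * (1 + Real.log δ) := by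
            rw [← h2]; exact h1
        _ = (∑ i, r i) - n - (ϱ + k * Real.log ε) := by rw [mul_add, hnlog]; ring
        _ ≤ k * |Real.log ε| := by rw [habs]; linarith
  refine le_trans (measure_mono hsub) ?_
  refine le_trans (measure_iUnion_le _) ?_
  have hbox : ∀ i : Fin n, volume (Set.pi Set.univ
      (fun j => if j = i then Set.Ico (0:ℝ) δ else Set.Icc 0 ϱ)) =
      ENNReal.ofReal δ * ENNReal.ofReal ϱ ^ (n - 1) := by
    intro i
    rw [volume_pi_pi]
    rw [← Finset.mul_prod_erase Finset.univ _ (Finset.mem_univ i)]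
    rw [if_pos rfl, Real.volume_Ico, sub_zero]
    congr 1
    have : ∀ j ∈ Finset.univ.erase i,
        volume (if j = i then Set.Ico (0:ℝ) δ else Set.Icc 0 ϱ) = ENNReal.ofReal ϱ := by
      intro j hj
      rw [if_neg (Finset.ne_of_mem_erase hj), Real.volume_Icc, sub_zero]
    rw [Finset.prod_congr rfl this, Finset.prod_const,
      Finset.card_erase_of_mem (Finset.mem_univ i), Finset.card_univ, Fintype.card_fin]
  calc ∑' i : Fin n, volume (Set.pi Set.univ
        (fun j => if j = i then Set.Ico (0:ℝ) δ else Set.Icc 0 ϱ))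
      = ∑' _ : Fin n, ENNReal.ofReal δ * ENNReal.ofReal ϱ ^ (n - 1) := by
        exact tsum_congr hbox
    _ = n * (ENNReal.ofReal δ * ENNReal.ofReal ϱ ^ (n - 1)) := by
        rw [tsum_fintype]; simp [Finset.card_univ, nsmul_eq_mul]
    _ = ENNReal.ofReal (n * ϱ ^ (n-1) * Real.exp (ϱ / n) * ε ^ (k / n)) := by
        rw [hδdef, ENNReal.ofReal_mul (Real.exp_pos _).le,
          ENNReal.ofReal_mul (by positivity : (0:ℝ) ≤ (n:ℝ) * ϱ^(n-1) * Real.exp (ϱ/n)),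
          ENNReal.ofReal_mul (by positivity : (0:ℝ) ≤ (n:ℝ) * ϱ^(n-1)),
          ENNReal.ofReal_mul (by positivity : (0:ℝ) ≤ (n:ℝ)),
          ← ENNReal.ofReal_pow hϱ0.le, ENNReal.ofReal_natCast]
        ring
    _ ≤ ENNReal.ofReal (n * ϱ ^ (n-1) * Real.exp (ϱ / n) * ε ^ (k / n)) := le_refl _
end
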